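/- arXiv:2407.09469 — 3 statements merged into one kernel-verified Lean document; each statement's English description precedes it below -/
import Mathlib

section
/- The weighted-hot encoding h : [0,L] → ℝ^{L+1} is 2-Lipschitz in the ℓ¹ norm: ‖h(s) - h(s')‖₁ ≤ 2|s - s'| for all s, s' ∈ [0,L]. -/
/-! On each unit cell `[n, n + 1]` the encoding is affine and only moves mass between the
coordinates `n` and `n + 1`, so it is `2`-Lipschitz there for the `ℓ¹` distance. A map on `ℝ`
that is `K`-Lipschitz on every cell is `K`-Lipschitz: cut a segment at the integers it crosses
and add up the bounds with the triangle inequality. -/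

/-- Weighted-hot encoding of a position `s ∈ [0,L]` into a vector indexed by `{0,…,L}`. -/
noncomputable def weightedHot (L : ℕ) (s : ℝ) : Fin (L + 1) → ℝ := fun k =>
  if (k : ℤ) = ⌊s⌋ then 1 - (s - ⌊s⌋)
  else if (k : ℤ) = ⌊s⌋ + 1 then s - ⌊s⌋
  else 0

open Set Function NNReal

section UnitCells

variable {E : Type*} [PseudoMetricSpace E] {K : ℝ≥0} {f : ℝ → E}

theorem LipschitzOnWith.dist_le_mul_sub {s : Set ℝ} (hf : LipschitzOnWith K f s) {x y : ℝ}
    (hx : x ∈ s) (hy : y ∈ s) (hxy : x ≤ y) : dist (f x) (f y) ≤ K * (y - x) := by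
  simpa [Real.dist_eq, abs_sub_comm x y, abs_of_nonneg (sub_nonneg.2 hxy)]
    using hf.dist_le_mul x hx y hy

theorem dist_le_mul_sub_of_lipschitzOnWith_Icc_intCast
    (hf : ∀ n : ℤ, LipschitzOnWith K f (Icc n (n + 1))) (d : ℕ) :
    ∀ {x y : ℝ}, x ≤ y → ⌊y⌋ = ⌊x⌋ + d → dist (f x) (f y) ≤ K * (y - x) := by
  induction d with
  | zero =>
    intro x y hxy hfl
    have hy : y < ⌊x⌋ + 1 := by simpa [hfl] using Int.lt_floor_add_one y
    exact (hf ⌊x⌋).dist_le_mul_sub ⟨Int.floor_le x, (Int.lt_floor_add_one x).le⟩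
      ⟨(Int.floor_le x).trans hxy, hy.le⟩ hxy
  | succ d ih =>
    intro x y hxy hfl
    set z : ℝ := ⌊x⌋ + 1 with hz
    have hxz : x ≤ z := (Int.lt_floor_add_one x).le
    have hzy : z ≤ y := by
      have : ⌊x⌋ + 1 ≤ ⌊y⌋ := by omega
      exact le_trans (by rw [hz]; exact_mod_cast this) (Int.floor_le y)
    have hzfl : ⌊z⌋ = ⌊x⌋ + 1 := by simp [z]
    calc dist (f x) (f y) ≤ dist (f x) (f z) + dist (f z) (f y) := dist_triangle _ _ _
      _ ≤ K * (z - x) + K * (y - z) :=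
        add_le_add ((hf ⌊x⌋).dist_le_mul_sub ⟨Int.floor_le x, hxz⟩ ⟨by simp [z], le_rfl⟩ hxz)
          (ih hzy (by omega))
      _ = K * (y - x) := by ring

theorem LipschitzWith.of_lipschitzOnWith_Icc_intCast
    (hf : ∀ n : ℤ, LipschitzOnWith K f (Icc n (n + 1))) : LipschitzWith K f := by
  have hle : ∀ x y : ℝ, x ≤ y → dist (f x) (f y) ≤ K * dist x y := fun x y hxy => by
    rw [Real.dist_eq, abs_sub_comm, abs_of_nonneg (sub_nonneg.2 hxy)]
    refine dist_le_mul_sub_of_lipschitzOnWith_Icc_intCast hf (⌊y⌋ - ⌊x⌋).toNat hxy ?_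
    have := Int.floor_le_floor hxy
    omega
  refine LipschitzWith.of_dist_le_mul fun x y => ?_
  rcases le_total x y with hxy | hyx
  · exact hle x y hxy
  · rw [dist_comm, dist_comm x]
    exact hle y x hyx

end UnitCells

theorem Finset.sum_ite_mem_le_card_mul {ι α R : Type*} [Fintype ι] [DecidableEq α]
    [Semiring R] [PartialOrder R] [IsOrderedRing R] {e : ι → α} (he : Injective e)
    (S : Finset α) {c : R} (hc : 0 ≤ c) :
    ∑ i, (if e i ∈ S then c else 0) ≤ S.card * c := by
  rw [Finset.sum_ite, Finset.sum_const, Finset.sum_const_zero, add_zero, nsmul_eq_mul]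
  gcongr
  exact Finset.card_le_card_of_injOn e (fun i hi => (Finset.mem_filter.1 hi).2) he.injOn

/-- At `t = n + 1` the floor is `n + 1` rather than `n`, but both descriptions give the unit
vector at `n + 1`. -/
theorem weightedHot_of_mem_Icc (L : ℕ) {n : ℤ} {t : ℝ} (ht : t ∈ Icc (n : ℝ) (n + 1))
    (k : Fin (L + 1)) :
    weightedHot L t k =
      if (k : ℤ) = n then n + 1 - t else if (k : ℤ) = n + 1 then t - n else 0 := by
  rcases ht.2.lt_or_eq with hlt | rfl
  · have hfl : ⌊t⌋ = n := Int.floor_eq_iff.2 ⟨ht.1, hlt⟩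
    simp only [weightedHot, hfl]
    ring_nf
  · have hfl : ⌊(n : ℝ) + 1⌋ = n + 1 := by exact_mod_cast Int.floor_intCast (n + 1)
    simp only [weightedHot, hfl]
    split_ifs <;> first | omega | (push_cast; ring)

theorem abs_weightedHot_sub_of_mem_Icc (L : ℕ) {n : ℤ} {s t : ℝ}
    (hs : s ∈ Icc (n : ℝ) (n + 1)) (ht : t ∈ Icc (n : ℝ) (n + 1)) (k : Fin (L + 1)) :
    |weightedHot L s k - weightedHot L t k| =
      if (k : ℤ) ∈ ({n, n + 1} : Finset ℤ) then |s - t| else 0 := by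
  rw [weightedHot_of_mem_Icc L hs, weightedHot_of_mem_Icc L ht]
  simp only [Finset.mem_insert, Finset.mem_singleton]
  split_ifs <;> first | omega | simp [abs_sub_comm]

theorem weightedHot_lipschitzOnWith_Icc (L : ℕ) (n : ℤ) :
    LipschitzOnWith 2 (fun t => WithLp.toLp 1 (weightedHot L t)) (Icc (n : ℝ) (n + 1)) := by
  refine LipschitzOnWith.of_dist_le_mul fun s hs t ht => ?_
  simp only [PiLp.dist_eq_of_L1, Real.dist_eq, abs_weightedHot_sub_of_mem_Icc L hs ht]
  have hinj : Injective fun k : Fin (L + 1) => ((k : ℕ) : ℤ) :=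
    Nat.cast_injective.comp Fin.val_injective
  calc _ ≤ (({n, n + 1} : Finset ℤ).card : ℝ) * |s - t| :=
        Finset.sum_ite_mem_le_card_mul hinj _ (abs_nonneg _)
    _ ≤ 2 * |s - t| := by
        gcongr
        exact_mod_cast Finset.card_le_two

theorem weightedHot_lipschitzWith (L : ℕ) :
    LipschitzWith 2 fun t => WithLp.toLp 1 (weightedHot L t) :=
  .of_lipschitzOnWith_Icc_intCast (weightedHot_lipschitzOnWith_Icc L)

theorem weightedHot_two_lipschitz_l1_general (L : ℕ) :
    ∀ s ∈ Set.Icc (0:ℝ) L, ∀ s' ∈ Set.Icc (0:ℝ) L,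
      ∑ k, |weightedHot L s k - weightedHot L s' k| ≤ 2 * |s - s'| := by
  intro s _ s' _
  simpa only [PiLp.dist_eq_of_L1, Real.dist_eq, NNReal.coe_ofNat] using (weightedHot_lipschitzWith L).dist_le_mul s s'

theorem weightedHot_two_lipschitz_l1 (L : ℕ) (hL : 0 < L) :
    ∀ s ∈ Set.Icc (0:ℝ) L, ∀ s' ∈ Set.Icc (0:ℝ) L,
      ∑ k, |weightedHot L s k - weightedHot L s' k| ≤ 2 * |s - s'| :=
  weightedHot_two_lipschitz_l1_general L
end

section
/- Potential-based reward shaping preserves optimal policies: for an MDP with finite state space S, actions A, deterministic transition T : S×A → S, reward R, discount γ ∈ (0,1), and any potential Φ : S → ℝ, the shaped reward R'(s,a) = R(s,a) + γ·Φ(T(s,a)) - Φ(s) yields optimal action-value functions satisfying Q'*(s,a) = Q*(s,a) - Φ(s); hence argmax_a Q'*(s,a) = argmax_a Q*(s,a) for every state s. -/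
theorem potential_shaping_preserves_optimal_policy
    {S A : Type*} [Fintype S] [Fintype A] [Nonempty S] [Nonempty A]
    (T : S → A → S) (R : S → A → ℝ) (γ : ℝ) (hγ : γ ∈ Set.Ioo (0:ℝ) 1)
    (Φ : S → ℝ) (Q Q' : S → A → ℝ)
    (hQ : ∀ s a, Q s a = R s a +
      γ * (Finset.univ.sup' Finset.univ_nonempty fun a' => Q (T s a) a'))
    (hQ' : ∀ s a, Q' s a = (R s a + γ * Φ (T s a) - Φ s) +
      γ * (Finset.univ.sup' Finset.univ_nonempty fun a' => Q' (T s a) a')) :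
    (∀ s a, Q' s a = Q s a - Φ s) ∧
    (∀ s : S, {a : A | ∀ b, Q' s b ≤ Q' s a} = {a : A | ∀ b, Q s b ≤ Q s a}) := by
  obtain ⟨hγ0, hγ1⟩ := hγ
  set D : S × A → ℝ := fun p => Q' p.1 p.2 - Q p.1 p.2 + Φ p.1 with hD
  set M : ℝ := Finset.univ.sup' Finset.univ_nonempty (fun p : S × A => |D p|) with hM
  have hDM : ∀ p : S × A, |D p| ≤ M := by
    intro p; rw [hM]; exact Finset.le_sup' (fun p : S × A => |D p|) (Finset.mem_univ p)
  -- key recursion bound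
  have key : ∀ p : S × A, |D p| ≤ γ * M := by
    rintro ⟨s, a⟩
    have h1 := hQ s a
    have h2 := hQ' s a
    set t := T s a
    have hDsa : D (s, a) = γ * ((Finset.univ.sup' Finset.univ_nonempty fun a' => Q' t a')
        - ((Finset.univ.sup' Finset.univ_nonempty fun a' => Q t a') - Φ t)) := by
      simp only [hD]
      rw [h1, h2]; ring
    have hub : |(Finset.univ.sup' Finset.univ_nonempty fun a' => Q' t a')
        - ((Finset.univ.sup' Finset.univ_nonempty fun a' => Q t a') - Φ t)| ≤ M := by
      rw [abs_le]
      constructor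
      · rw [neg_le, ← sub_nonneg]
        have : ∃ a', (Finset.univ.sup' Finset.univ_nonempty fun a' => Q t a') = Q t a' := by
          obtain ⟨b, _, hb⟩ := Finset.exists_mem_eq_sup' Finset.univ_nonempty (fun a' => Q t a')
          exact ⟨b, hb⟩
        obtain ⟨b, hb⟩ := this
        have hle : Q' t b ≤ Finset.univ.sup' Finset.univ_nonempty fun a' => Q' t a' :=
          Finset.le_sup' _ (Finset.mem_univ b)
        have hDb : -M ≤ D (t, b) := neg_le_of_abs_le (hDM (t, b))
        simp only [hD] at hDb
        rw [hb]
        nlinarith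
      · have : ∃ b, (Finset.univ.sup' Finset.univ_nonempty fun a' => Q' t a') = Q' t b := by
          obtain ⟨b, _, hb⟩ := Finset.exists_mem_eq_sup' Finset.univ_nonempty (fun a' => Q' t a')
          exact ⟨b, hb⟩
        obtain ⟨b, hb⟩ := this
        have hle : Q t b ≤ Finset.univ.sup' Finset.univ_nonempty fun a' => Q t a' :=
          Finset.le_sup' _ (Finset.mem_univ b)
        have hDb : D (t, b) ≤ M := le_of_abs_le (hDM (t, b))
        simp only [hD] at hDb
        rw [hb]
        nlinarith
    calc |D (s, a)| = γ * |(Finset.univ.sup' Finset.univ_nonempty fun a' => Q' t a')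
        - ((Finset.univ.sup' Finset.univ_nonempty fun a' => Q t a') - Φ t)| := by
          rw [hDsa, abs_mul, abs_of_pos hγ0]
      _ ≤ γ * M := by nlinarith [abs_nonneg (D (s, a))]
  have hM0 : M ≤ 0 := by
    obtain ⟨p, _, hp⟩ := Finset.exists_mem_eq_sup' (Finset.univ_nonempty (α := S × A))
      (fun p : S × A => |D p|)
    have := key p
    rw [← hp] at this
    nlinarith
  have hDzero : ∀ p : S × A, D p = 0 := fun p =>
    abs_eq_zero.mp (le_antisymm ((hDM p).trans hM0) (abs_nonneg _))
  have main : ∀ s a, Q' s a = Q s a - Φ s := by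
    intro s a
    have := hDzero (s, a)
    simp only [hD] at this
    linarith
  refine ⟨main, fun s => ?_⟩
  ext a
  simp only [Set.mem_setOf_eq, main]
  constructor <;> intro h b <;> have := h b <;> linarith
end

section
/- For a deterministic MDP with discount γ ∈ (0,1) and potential Φ, along any infinite trajectory (s⁰, a⁰, s¹, a¹, …) the shaped discounted return equals the original discounted return minus Φ(s⁰): ∑ₜ γᵗ·(R(sᵗ,aᵗ) + γΦ(sᵗ⁺¹) - Φ(sᵗ)) = ∑ₜ γᵗ·R(sᵗ,aᵗ) - Φ(s⁰), provided both series converge absolutely (e.g., R and Φ bounded). -/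
/-! Writing `g t = γ ^ t * Φ (s t)`, the shaping term `γ ^ t * (γ * Φ (s (t + 1)) - Φ (s t))` is the
difference `g (t + 1) - g t`. Since `g` is summable (it is dominated by `C * γ ^ t`), these
differences sum to `-g 0 = -Φ (s 0)`, by comparing `∑ g` with its shift `∑ g (· + 1)`. -/

theorem Summable.tsum_succ_sub {G : Type*} [AddCommGroup G] [TopologicalSpace G]
    [IsTopologicalAddGroup G] [T2Space G] {g : ℕ → G} (hg : Summable g) :
    ∑' t, (g (t + 1) - g t) = -g 0 := by
  have hg' : Summable fun t => g (t + 1) := (summable_nat_add_iff 1).mpr hg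
  rw [hg'.tsum_sub hg, hg.tsum_eq_zero_add]
  abel

theorem summable_pow_mul_of_abs_le {γ C : ℝ} (hγ : |γ| < 1) {f : ℕ → ℝ}
    (hf : ∀ t, |f t| ≤ C) : Summable fun t => γ ^ t * f t :=
  ((summable_geometric_of_lt_one (abs_nonneg γ) hγ).mul_right C).of_norm_bounded fun t => by
    rw [norm_mul, norm_pow, Real.norm_eq_abs, Real.norm_eq_abs]
    exact mul_le_mul_of_nonneg_left (hf t) (by positivity)

theorem shaped_return_telescopes_general
    {S A : Type*} (R : S → A → ℝ) (Φ : S → ℝ)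
    (γ : ℝ) (hγ : γ ∈ Set.Ioo (0:ℝ) 1)
    (s : ℕ → S) (a : ℕ → A)
    (C : ℝ) (hR : ∀ x y, |R x y| ≤ C) (hΦ : ∀ x, |Φ x| ≤ C) :
    ∑' t : ℕ, γ ^ t * (R (s t) (a t) + γ * Φ (s (t + 1)) - Φ (s t))
      = (∑' t : ℕ, γ ^ t * R (s t) (a t)) - Φ (s 0) := by
  have hγ' : |γ| < 1 := by rw [abs_of_pos hγ.1]; exact hγ.2
  set g : ℕ → ℝ := fun t => γ ^ t * Φ (s t)
  have hsumR := summable_pow_mul_of_abs_le hγ' fun t => hR (s t) (a t)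
  have hsumg : Summable g := summable_pow_mul_of_abs_le hγ' fun t => hΦ (s t)
  calc ∑' t : ℕ, γ ^ t * (R (s t) (a t) + γ * Φ (s (t + 1)) - Φ (s t))
      = ∑' t : ℕ, (γ ^ t * R (s t) (a t) + (g (t + 1) - g t)) :=
        tsum_congr fun t => by simp only [g, pow_succ]; ring
    _ = (∑' t : ℕ, γ ^ t * R (s t) (a t)) - Φ (s 0) := by
        rw [hsumR.tsum_add ((summable_nat_add_iff 1).mpr hsumg |>.sub hsumg),
          hsumg.tsum_succ_sub]
        simp [g, sub_eq_add_neg]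

theorem shaped_return_telescopes
    {S A : Type*} (T : S → A → S) (R : S → A → ℝ) (Φ : S → ℝ)
    (γ : ℝ) (hγ : γ ∈ Set.Ioo (0:ℝ) 1)
    (s : ℕ → S) (a : ℕ → A)
    (htraj : ∀ t, s (t + 1) = T (s t) (a t))
    (C : ℝ) (hR : ∀ x y, |R x y| ≤ C) (hΦ : ∀ x, |Φ x| ≤ C) :
    ∑' t : ℕ, γ ^ t * (R (s t) (a t) + γ * Φ (s (t + 1)) - Φ (s t))
      = (∑' t : ℕ, γ ^ t * R (s t) (a t)) - Φ (s 0) :=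
  shaped_return_telescopes_general R Φ γ hγ s a C hR hΦ
end
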